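/- Let σ_{t-1}(x)² ≤ κ(x,x) ≤ 1 for all x, and σ > 0. Then for every t and x, σ_{t-1}(x)² ≤ C₁ σ² log(1 + σ^{-2} σ_{t-1}(x)²) where C₁ = σ^{-2}/log(1+σ^{-2}) ≥ 1. -/

import Mathlib

/-! By concavity of `log` (Bernoulli's inequality `(1 + c)^v ≤ 1 + v c` for `v ∈ [0, 1]`), the chord
bound `v log (1 + c) ≤ log (1 + c v)` holds on `[0, 1]`; with `c = σ⁻²` this is the variance bound,
since `C₁ σ² = 1 / log (1 + σ⁻²)`. The claim `C₁ ≥ 1` is `log (1 + c) ≤ c`. -/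

open Real

lemma mul_log_one_add_le_log_one_add_mul {c v : ℝ} (hc : -1 < c) (hv₀ : 0 ≤ v) (hv₁ : v ≤ 1) :
    v * log (1 + c) ≤ log (1 + c * v) := by
  have hbase : 0 < 1 + c := by linarith
  have hbernoulli : (1 + c) ^ v ≤ 1 + v * c := rpow_one_add_le_one_add_mul_self hc.le hv₀ hv₁
  calc v * log (1 + c) = log ((1 + c) ^ v) := (log_rpow hbase v).symm
    _ ≤ log (1 + c * v) := by
      rw [mul_comm c v]
      exact log_le_log (rpow_pos_of_pos hbase v) hbernoulli

lemma le_log_one_add_mul_div_log_one_add {c v : ℝ} (hc : 0 < c) (hv₀ : 0 ≤ v) (hv₁ : v ≤ 1) :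
    v ≤ log (1 + c * v) / log (1 + c) :=
  (le_div_iff₀ (log_pos (by linarith))).mpr (mul_log_one_add_le_log_one_add_mul (by linarith) hv₀ hv₁)

lemma one_le_div_log_one_add {c : ℝ} (hc : 0 < c) : 1 ≤ c / log (1 + c) := by
  rw [le_div_iff₀ (log_pos (by linarith)), one_mul]
  linarith [log_le_sub_one_of_pos (show 0 < 1 + c by linarith)]

lemma zpow_neg_two_mul_sq {σ : ℝ} (hσ : σ ≠ 0) : σ ^ (-2 : ℤ) * σ ^ 2 = 1 := by
  rw [zpow_neg, zpow_ofNat, inv_mul_cancel₀ (pow_ne_zero 2 hσ)]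

/-- GP posterior variance bound: if `σ_{t-1}(x)² ≤ κ(x,x) ≤ 1` and `σ > 0`,
then `σ_{t-1}(x)² ≤ C₁ σ² log (1 + σ⁻² σ_{t-1}(x)²)` with
`C₁ = σ⁻²/log(1+σ⁻²) ≥ 1`. -/
theorem stmt_18 {X : Type*} (σpost : ℕ → X → ℝ) (κ : X → X → ℝ) (σ : ℝ)
    (hσ : 0 < σ)
    (hvar : ∀ t x, (σpost t x) ^ 2 ≤ κ x x) (hκ : ∀ x : X, κ x x ≤ 1) :
    (∀ t x, (σpost t x) ^ 2 ≤ (σ ^ (-2 : ℤ) / Real.log (1 + σ ^ (-2 : ℤ))) *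
      σ ^ 2 * Real.log (1 + σ ^ (-2 : ℤ) * (σpost t x) ^ 2)) ∧
    1 ≤ σ ^ (-2 : ℤ) / Real.log (1 + σ ^ (-2 : ℤ)) := by
  have hc : 0 < σ ^ (-2 : ℤ) := by positivity
  refine ⟨fun t x => ?_, one_le_div_log_one_add hc⟩
  have hC₁σ : σ ^ (-2 : ℤ) / log (1 + σ ^ (-2 : ℤ)) * σ ^ 2 = 1 / log (1 + σ ^ (-2 : ℤ)) := by
    rw [div_mul_eq_mul_div, zpow_neg_two_mul_sq hσ.ne']
  rw [hC₁σ, one_div_mul_eq_div]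
  exact le_log_one_add_mul_div_log_one_add hc (sq_nonneg _) ((hvar t x).trans (hκ x))
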